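/- arXiv:2002.02674 — 5 statements merged into one kernel-verified Lean document; each statement's English description precedes it below -/
import Mathlib

section
/- If X is a compact subset of ℝ^n and T : X → ℝ^m is continuous and injective, then T is uniformly injective: there exists a class-K∞ function α such that |x₁ − x₂| ≤ α(|T(x₁) − T(x₂)|) for all x₁, x₂ ∈ X. -/
/-!
On the compact set `X` the inverse of `T` is uniformly continuous, so `‖x₁ - x₂‖ < C / 2 ^ (k + 1)`
as soon as `‖T x₁ - T x₂‖ < δ k`, where `C > 0` bounds the diameter of `X`. The majorant
`α s = s + ∑ₖ (C / 2 ^ k) * min 1 (s / δ k)` is of class K∞, and if `k` is the first index with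
`δ k ≤ s`, its `k`-th ramp already has full height `C / 2 ^ k`, which dominates `‖x₁ - x₂‖`.
-/

def IsKInfty (α : ℝ → ℝ) : Prop :=
  ContinuousOn α (Set.Ici 0) ∧ StrictMonoOn α (Set.Ici 0) ∧ α 0 = 0 ∧
    Filter.Tendsto α Filter.atTop Filter.atTop

open Set Filter

theorem IsCompact.exists_dist_lt_of_injOn {E F : Type*} [PseudoMetricSpace E] [MetricSpace F]
    {X : Set E} (hX : IsCompact X) {T : E → F} (hT : ContinuousOn T X) (hinj : InjOn T X)
    {ε : ℝ} (hε : 0 < ε) :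
    ∃ δ > 0, ∀ x ∈ X, ∀ y ∈ X, dist (T x) (T y) < δ → dist x y < ε := by
  have : CompactSpace X := isCompact_iff_compactSpace.mp hX
  let e : X ≃ₜ range (X.domRestrict T) :=
    ((continuousOn_iff_continuous_domRestrict.mp hT).isClosedEmbedding
      hinj.injective).toHomeomorph
  have : CompactSpace (range (X.domRestrict T)) := e.compactSpace
  obtain ⟨δ, hδ, h⟩ := Metric.uniformContinuous_iff.mp
    (CompactSpace.uniformContinuous_of_continuous e.symm.continuous) ε hε
  refine ⟨δ, hδ, fun x hx y hy hxy => ?_⟩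
  simpa only [Homeomorph.symm_apply_apply, Subtype.dist_eq] using @h (e ⟨x, hx⟩) (e ⟨y, hy⟩) hxy

noncomputable def ramp (δ s : ℝ) : ℝ := min 1 (max s 0 / δ)

section Ramp

variable {δ : ℝ}

theorem ramp_nonneg (hδ : 0 ≤ δ) (s : ℝ) : 0 ≤ ramp δ s :=
  le_min zero_le_one (div_nonneg (le_max_right s 0) hδ)

theorem ramp_le_one (δ s : ℝ) : ramp δ s ≤ 1 := min_le_left _ _

@[simp] theorem ramp_zero (δ : ℝ) : ramp δ 0 = 0 := by simp [ramp]

theorem ramp_of_le (hδ : 0 < δ) {s : ℝ} (hs : δ ≤ s) : ramp δ s = 1 := by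
  rw [ramp, max_eq_left (hδ.le.trans hs), min_eq_left ((one_le_div hδ).mpr hs)]

theorem monotone_ramp (hδ : 0 ≤ δ) : Monotone (ramp δ) := fun _ _ hab =>
  min_le_min_left _ (div_le_div_of_nonneg_right (max_le_max_right _ hab) hδ)

theorem continuous_ramp (δ : ℝ) : Continuous (ramp δ) := by
  unfold ramp; fun_prop

end Ramp

noncomputable def rampSeries (w δ : ℕ → ℝ) (s : ℝ) : ℝ := s + ∑' k, w k * ramp (δ k) s

section RampSeries

variable {w δ : ℕ → ℝ} (hw : ∀ k, 0 ≤ w k) (hws : Summable w) (hδ : ∀ k, 0 ≤ δ k)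
include hw hδ

theorem mul_ramp_nonneg (s : ℝ) (k : ℕ) : 0 ≤ w k * ramp (δ k) s :=
  mul_nonneg (hw k) (ramp_nonneg (hδ k) s)

include hws in
theorem summable_mul_ramp (s : ℝ) : Summable fun k => w k * ramp (δ k) s :=
  hws.of_nonneg_of_le (mul_ramp_nonneg hw hδ s)
    fun k => mul_le_of_le_one_right (hw k) (ramp_le_one _ _)

theorem self_le_rampSeries (s : ℝ) : s ≤ rampSeries w δ s :=
  le_add_of_nonneg_right (tsum_nonneg (mul_ramp_nonneg hw hδ s))

include hws in
theorem le_rampSeries {k : ℕ} (hδk : 0 < δ k) {s : ℝ} (hs : δ k ≤ s) : w k ≤ rampSeries w δ s :=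
  calc w k = w k * ramp (δ k) s := by rw [ramp_of_le hδk hs, mul_one]
    _ ≤ ∑' j, w j * ramp (δ j) s :=
      (summable_mul_ramp hw hws hδ s).le_tsum k fun j _ => mul_ramp_nonneg hw hδ s j
    _ ≤ rampSeries w δ s := le_add_of_nonneg_left (hδk.le.trans hs)

include hws in
theorem isKInfty_rampSeries : IsKInfty (rampSeries w δ) := by
  refine ⟨?_, fun a _ b _ hab => ?_, by simp [rampSeries], ?_⟩
  · refine (continuous_id.add (continuous_tsum (fun k => ?_) hws fun k s => ?_)).continuousOn
    · exact continuous_const.mul (continuous_ramp _)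
    · rw [Real.norm_of_nonneg (mul_ramp_nonneg hw hδ s k)]
      exact mul_le_of_le_one_right (hw k) (ramp_le_one _ _)
  · exact add_lt_add_of_lt_of_le hab <|
      (summable_mul_ramp hw hws hδ a).tsum_le_tsum
        (fun k => mul_le_mul_of_nonneg_left (monotone_ramp (hδ k) hab.le) (hw k))
        (summable_mul_ramp hw hws hδ b)
  · exact tendsto_atTop_mono (self_le_rampSeries hw hδ) tendsto_id

end RampSeries

theorem exists_isKInfty_le_of_forall_lt {ι : Type*} {r s : ι → ℝ} (hs : ∀ i, 0 ≤ s i)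
    (hr : BddAbove (range r)) (hrs : ∀ ε > 0, ∃ δ > 0, ∀ i, s i < δ → r i < ε) :
    ∃ α, IsKInfty α ∧ ∀ i, r i ≤ α (s i) := by
  obtain ⟨C, hC0, hC⟩ : ∃ C > 0, ∀ i, r i ≤ C := by
    obtain ⟨C, hC⟩ := hr
    exact ⟨max C 1, by positivity, fun i => (hC (mem_range_self i)).trans (le_max_left _ _)⟩
  choose δ hδ hδr using fun k : ℕ => hrs (C / 2 ^ (k + 1)) (by positivity)
  have hδ0 : ∀ k, 0 ≤ δ k := fun k => (hδ k).le
  have hw : ∀ k : ℕ, 0 ≤ C / 2 ^ k := fun k => by positivity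
  have hws : Summable fun k : ℕ => C / 2 ^ k := by
    convert summable_geometric_two' (2 * C) using 2; ring
  refine ⟨rampSeries (fun k => C / 2 ^ k) δ, isKInfty_rampSeries hw hws hδ0, fun i => ?_⟩
  by_cases hreach : ∃ k, δ k ≤ s i
  · -- at the first ramp that `s i` has climbed, the previous `δ` controls `r i`
    refine le_trans ?_ (le_rampSeries hw hws hδ0 (hδ _) (Nat.find_spec hreach))
    rcases hk : Nat.find hreach with _ | k
    · simpa using hC i
    · exact (hδr k i (not_le.mp (Nat.find_min hreach (hk ▸ k.lt_succ_self)))).le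
  · push Not at hreach
    have hr0 : r i ≤ 0 := by
      have h2pow : Tendsto (fun k : ℕ => (2 : ℝ) ^ (k + 1)) atTop atTop :=
        (tendsto_pow_atTop_atTop_of_one_lt one_lt_two).comp (tendsto_add_atTop_nat 1)
      exact ge_of_tendsto' (tendsto_const_nhds.div_atTop h2pow) fun k => (hδr k i (hreach k)).le
    exact hr0.trans ((hs i).trans (self_le_rampSeries hw hδ0 _))

/-- a continuous injective map on a compact set is uniformly injective. -/
theorem stmt2 {n m : ℕ} (X : Set (EuclideanSpace ℝ (Fin n)))
    (hX : IsCompact X)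
    (T : EuclideanSpace ℝ (Fin n) → EuclideanSpace ℝ (Fin m))
    (hT : ContinuousOn T X) (hinj : Set.InjOn T X) :
    ∃ α : ℝ → ℝ, IsKInfty α ∧
      ∀ x₁ ∈ X, ∀ x₂ ∈ X, ‖x₁ - x₂‖ ≤ α ‖T x₁ - T x₂‖ := by
  obtain ⟨C, hC⟩ := Metric.isBounded_iff.mp hX.isBounded
  obtain ⟨α, hα, hle⟩ := exists_isKInfty_le_of_forall_lt
    (r := fun p : X × X => ‖(p.1 : EuclideanSpace ℝ (Fin n)) - p.2‖)
    (s := fun p : X × X => ‖T p.1 - T p.2‖) (fun _ => norm_nonneg _)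
    ⟨C, forall_mem_range.mpr fun p => by simpa [dist_eq_norm] using hC p.1.2 p.2.2⟩
    fun ε hε => by
      obtain ⟨δ, hδ, h⟩ := hX.exists_dist_lt_of_injOn hT hinj hε
      exact ⟨δ, hδ, fun p => by simpa [dist_eq_norm] using h _ p.1.2 _ p.2.2⟩
  exact ⟨α, hα, fun x₁ hx₁ x₂ hx₂ => hle (⟨x₁, hx₁⟩, ⟨x₂, hx₂⟩)⟩
end

section
/- Suppose f : ℝ^n → ℝ^n is invertible with continuous inverse, h : ℝ^n → ℝ^p is continuous, and there exist nonnegative constants C₁, C₂, C₁', C₂' with |x| ≤ C₁ + C₂|f(x)| and |h(x)| ≤ C₁' + C₂'|x| for all x. Let A be a normal m×m matrix with ρ(A) < min(1, 1/C₂) and B ∈ ℝ^{m×p}. Then the series T(x) = Σ_{i=0}^∞ A^i B h(f^{−(i+1)}(x)) converges for every x ∈ ℝ^n and defines a continuous function T : ℝ^n → ℝ^m. -/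
open Matrix

noncomputable def specRad {m : ℕ} (A : Matrix (Fin m) (Fin m) ℝ) : ℝ :=
  sSup ((fun z : ℂ => ‖z‖) '' spectrum ℂ (A.map Complex.ofReal))

def mulVecE {m p : ℕ} (A : Matrix (Fin m) (Fin p) ℝ) (x : EuclideanSpace ℝ (Fin p)) :
    EuclideanSpace ℝ (Fin m) := WithLp.toLp 2 (A.mulVec x)

open scoped Matrix.Norms.L2Operator

namespace Stmt3Aux

set_option maxHeartbeats 1000000

noncomputable instance matCStarAlgebra {k : ℕ} [Nonempty (Fin k)] :
    CStarAlgebra (Matrix (Fin k) (Fin k) ℂ) :=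
  { (inferInstance : NormedRing (Matrix (Fin k) (Fin k) ℂ)),
    (inferInstance : StarRing (Matrix (Fin k) (Fin k) ℂ)),
    (inferInstance : CStarRing (Matrix (Fin k) (Fin k) ℂ)),
    (inferInstance : NormedAlgebra ℂ (Matrix (Fin k) (Fin k) ℂ)),
    (inferInstance : StarModule ℂ (Matrix (Fin k) (Fin k) ℂ)),
    (inferInstance : CompleteSpace (Matrix (Fin k) (Fin k) ℂ)) with }

noncomputable def cmat {a b : ℕ} (M : Matrix (Fin a) (Fin b) ℝ) : Matrix (Fin a) (Fin b) ℂ :=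
  M.map Complex.ofReal

lemma cmat_mul {a b c : ℕ} (M : Matrix (Fin a) (Fin b) ℝ) (N : Matrix (Fin b) (Fin c) ℝ) :
    cmat (M * N) = cmat M * cmat N := by
  ext i j
  simp [cmat, Matrix.mul_apply, Matrix.map_apply]

lemma cmat_pow {a : ℕ} (M : Matrix (Fin a) (Fin a) ℝ) (k : ℕ) :
    cmat (M ^ k) = cmat M ^ k := by
  induction k with
  | zero =>
    ext i j
    simp [cmat, Matrix.one_apply, Matrix.map_apply, apply_ite (Complex.ofReal)]
  | succ k ih => rw [pow_succ, pow_succ, cmat_mul, ih]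

lemma norm_mulVecE_le {a b : ℕ} (M : Matrix (Fin a) (Fin b) ℝ) (v : EuclideanSpace ℝ (Fin b)) :
    ‖mulVecE M v‖ ≤ ‖cmat M‖ * ‖v‖ := by
  set vc : EuclideanSpace ℂ (Fin b) := (EuclideanSpace.equiv (Fin b) ℂ).symm fun j => (v j : ℂ)
    with hvc
  have hnv : ‖vc‖ = ‖v‖ := by
    simp [hvc, EuclideanSpace.norm_eq]
  have key : ∀ i, ((cmat M) *ᵥ vc) i = ((M *ᵥ (v : Fin b → ℝ)) i : ℂ) := by
    intro i
    simp [hvc, cmat, Matrix.mulVec, dotProduct, Matrix.map_apply]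
  have h1 := Matrix.l2_opNorm_mulVec (cmat M) vc
  rw [hnv] at h1
  have h2 : ‖(EuclideanSpace.equiv (Fin a) ℂ).symm ((cmat M) *ᵥ vc)‖ = ‖mulVecE M v‖ := by
    simp [EuclideanSpace.norm_eq, mulVecE, key]
  rwa [h2] at h1

lemma specRad_nonneg {m : ℕ} (A : Matrix (Fin m) (Fin m) ℝ) : 0 ≤ specRad A :=
  Real.sSup_nonneg (by rintro x ⟨z, -, rfl⟩; exact norm_nonneg z)

lemma norm_cmat_eq {m : ℕ} (hm : 0 < m) (A : Matrix (Fin m) (Fin m) ℝ)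
    (hnormal : A * Aᵀ = Aᵀ * A) : ‖cmat A‖ = specRad A := by
  haveI : Nonempty (Fin m) := ⟨⟨0, hm⟩⟩
  haveI : Nontrivial (Matrix (Fin m) (Fin m) ℂ) := inferInstance
  have hstar : star (cmat A) = cmat Aᵀ := by
    ext i j
    simp [cmat, Matrix.star_apply, Matrix.map_apply, Matrix.conjTranspose_apply,
      Complex.conj_ofReal]
  haveI hsn : IsStarNormal (cmat A) := ⟨by
    show star (cmat A) * cmat A = cmat A * star (cmat A)
    rw [hstar, ← cmat_mul, ← cmat_mul, hnormal]⟩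
  have hsr := IsStarNormal.spectralRadius_eq_nnnorm (cmat A)
  have hS : (spectrum ℂ (cmat A)).Nonempty := spectrum.nonempty (cmat A)
  have hSc : IsCompact (spectrum ℂ (cmat A)) := spectrum.isCompact (cmat A)
  have hbdd : BddAbove ((fun z : ℂ => ‖z‖) '' spectrum ℂ (cmat A)) :=
    (hSc.image continuous_norm).bddAbove
  have hspec : specRad A = sSup ((fun z : ℂ => ‖z‖) '' spectrum ℂ (cmat A)) := rfl
  rw [hspec]
  refine le_antisymm ?_ ?_
  · have h1 : spectralRadius ℂ (cmat A) ≤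
        ENNReal.ofReal (sSup ((fun z : ℂ => ‖z‖) '' spectrum ℂ (cmat A))) := by
      rw [spectralRadius]
      refine iSup₂_le fun k hk => ?_
      rw [← ENNReal.ofReal_coe_nnreal, coe_nnnorm]
      refine ENNReal.ofReal_le_ofReal ?_
      exact le_csSup hbdd ⟨k, hk, rfl⟩
    rw [hsr, ← ENNReal.ofReal_coe_nnreal, coe_nnnorm] at h1
    refine (ENNReal.ofReal_le_ofReal_iff ?_).mp h1
    obtain ⟨z, hz⟩ := hS
    exact le_trans (norm_nonneg z) (le_csSup hbdd ⟨z, hz, rfl⟩)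
  · refine Real.sSup_le ?_ ?_
    · rintro x ⟨z, hz, rfl⟩
      exact spectrum.norm_le_norm_of_mem hz
    · exact norm_nonneg _

lemma continuous_mulVecE {a b : ℕ} (M : Matrix (Fin a) (Fin b) ℝ) :
    Continuous (mulVecE M) := by
  have h : mulVecE M = fun x => Matrix.toEuclideanLin M x := rfl
  rw [h]
  exact (Matrix.toEuclideanLin M).continuous_of_finiteDimensional

end Stmt3Aux

set_option maxHeartbeats 2000000

open Stmt3Aux in
/-- under the growth bounds and `ρ(A) < min(1, 1/C₂)` (encoded as
`ρ(A) < 1` and `C₂·ρ(A) < 1`) with `A` normal, the Luenberger series converges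
everywhere and defines a continuous function. -/
theorem stmt3 {n m p : ℕ}
    (f finv : EuclideanSpace ℝ (Fin n) → EuclideanSpace ℝ (Fin n))
    (hbij : Function.LeftInverse finv f ∧ Function.RightInverse finv f)
    (hfinv : Continuous finv)
    (h : EuclideanSpace ℝ (Fin n) → EuclideanSpace ℝ (Fin p)) (hh : Continuous h)
    (C₁ C₂ C₁' C₂' : ℝ) (hC₁ : 0 ≤ C₁) (hC₂ : 0 ≤ C₂) (hC₁' : 0 ≤ C₁') (hC₂' : 0 ≤ C₂')
    (hgrowth : ∀ x, ‖x‖ ≤ C₁ + C₂ * ‖f x‖)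
    (hout : ∀ x, ‖h x‖ ≤ C₁' + C₂' * ‖x‖)
    (A : Matrix (Fin m) (Fin m) ℝ) (hnormal : A * Aᵀ = Aᵀ * A)
    (hA1 : specRad A < 1) (hA2 : C₂ * specRad A < 1)
    (B : Matrix (Fin m) (Fin p) ℝ) :
    (∀ x, Summable (fun i : ℕ => mulVecE (A ^ i * B) (h (finv^[i + 1] x)))) ∧
      Continuous (fun x => ∑' i : ℕ, mulVecE (A ^ i * B) (h (finv^[i + 1] x))) := by
  rcases Nat.eq_zero_or_pos m with hm | hm
  · subst hm
    haveI : Subsingleton (EuclideanSpace ℝ (Fin 0)) :=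
      ⟨fun a b => by ext i; exact Fin.elim0 i⟩
    constructor
    · intro x
      have : (fun i : ℕ => mulVecE (A ^ i * B) (h (finv^[i + 1] x))) = fun _ => 0 :=
        funext fun i => Subsingleton.elim _ _
      rw [this]; exact summable_zero
    · exact continuous_of_const fun a b => Subsingleton.elim _ _
  -- main case
  haveI : Nonempty (Fin m) := ⟨⟨0, hm⟩⟩
  haveI : Nontrivial (Matrix (Fin m) (Fin m) ℂ) := inferInstance
  set q : ℝ := specRad A with hqdef
  have hq0 : 0 ≤ q := specRad_nonneg A
  have hAc : ‖cmat A‖ = q := norm_cmat_eq hm A hnormal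
  set M : ℝ := max 1 C₂ with hMdef
  have hM1 : (1 : ℝ) ≤ M := le_max_left _ _
  have hMC : C₂ ≤ M := le_max_right _ _
  have hM0 : 0 ≤ M := le_trans zero_le_one hM1
  set t : ℝ := M * q with htdef
  have ht0 : 0 ≤ t := mul_nonneg hM0 hq0
  have ht1 : t < 1 := by
    show max 1 C₂ * q < 1
    rcases max_cases 1 C₂ with ⟨hMx, _⟩ | ⟨hMx, _⟩ <;> rw [hMx]
    · simpa using hA1
    · exact hA2
  have hqt : q ≤ t := by
    calc q = 1 * q := (one_mul q).symm
    _ ≤ M * q := mul_le_mul_of_nonneg_right hM1 hq0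
  have hCt : C₂ * q ≤ t := mul_le_mul_of_nonneg_right hMC hq0
  -- growth of iterates
  have hfinv_bound : ∀ (x : EuclideanSpace ℝ (Fin n)) (k : ℕ),
      ‖finv^[k] x‖ ≤ C₁ * k * M ^ k + C₂ ^ k * ‖x‖ := by
    intro x k
    induction k with
    | zero => simp
    | succ k ih =>
      have hstep : finv^[k + 1] x = finv (finv^[k] x) := Function.iterate_succ_apply' finv k x
      have hfx : f (finv (finv^[k] x)) = finv^[k] x := hbij.2 _
      have h1 : ‖finv^[k+1] x‖ ≤ C₁ + C₂ * ‖finv^[k] x‖ := by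
        rw [hstep]
        calc ‖finv (finv^[k] x)‖ ≤ C₁ + C₂ * ‖f (finv (finv^[k] x))‖ := hgrowth _
        _ = C₁ + C₂ * ‖finv^[k] x‖ := by rw [hfx]
      have h2 : C₁ + C₂ * ‖finv^[k] x‖ ≤ C₁ + C₂ * (C₁ * k * M ^ k + C₂ ^ k * ‖x‖) := by
        have := mul_le_mul_of_nonneg_left ih hC₂
        linarith
      have hMk : (1 : ℝ) ≤ M ^ (k + 1) := one_le_pow₀ hM1
      have h3 : C₁ + C₂ * (C₁ * k * M ^ k + C₂ ^ k * ‖x‖)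
          ≤ C₁ * ((k : ℝ) + 1) * M ^ (k + 1) + C₂ ^ (k + 1) * ‖x‖ := by
        have hc1 : C₂ * (C₁ * k * M ^ k) ≤ C₁ * k * M ^ (k+1) := by
          have hCk : C₂ * M ^ k ≤ M * M ^ k :=
            mul_le_mul_of_nonneg_right hMC (pow_nonneg hM0 _)
          have hk0 : (0:ℝ) ≤ C₁ * k := mul_nonneg hC₁ (Nat.cast_nonneg k)
          calc C₂ * (C₁ * k * M ^ k) = (C₁ * k) * (C₂ * M ^ k) := by ring
          _ ≤ (C₁ * k) * (M * M ^ k) := mul_le_mul_of_nonneg_left hCk hk0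
          _ = C₁ * k * M ^ (k+1) := by ring
        have hc2 : C₂ * (C₂ ^ k * ‖x‖) = C₂ ^ (k+1) * ‖x‖ := by ring
        have hc3 : C₁ ≤ C₁ * M ^ (k+1) := le_mul_of_one_le_right hC₁ hMk
        have hexp : C₁ * ((k : ℝ) + 1) * M ^ (k+1) = C₁ * k * M ^ (k+1) + C₁ * M ^ (k+1) := by
          ring
        rw [mul_add, hexp]
        linarith
      have hfinal : C₁ * ((k : ℝ) + 1) * M ^ (k + 1) + C₂ ^ (k + 1) * ‖x‖
          = C₁ * (↑(k + 1) : ℝ) * M ^ (k + 1) + C₂ ^ (k + 1) * ‖x‖ := by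
        push_cast; ring
      calc ‖finv^[k+1] x‖ ≤ C₁ + C₂ * ‖finv^[k] x‖ := h1
      _ ≤ C₁ + C₂ * (C₁ * k * M ^ k + C₂ ^ k * ‖x‖) := h2
      _ ≤ C₁ * ((k : ℝ) + 1) * M ^ (k + 1) + C₂ ^ (k + 1) * ‖x‖ := h3
      _ = C₁ * (↑(k + 1) : ℝ) * M ^ (k + 1) + C₂ ^ (k + 1) * ‖x‖ := hfinal
  -- termwise bound
  set K : ℝ → ℝ := fun R => ‖cmat B‖ * (C₁' + C₂' * (C₁ * M + C₂ * R)) with hKdef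
  set w : ℕ → ℝ := fun i => ((i : ℝ) + 1) * t ^ i with hwdef
  have hw : Summable w := by
    have h1 : Summable (fun i : ℕ => (i : ℝ) * t ^ i) := by
      have := summable_pow_mul_geometric_of_norm_lt_one 1 (r := t)
        (by rwa [Real.norm_eq_abs, abs_of_nonneg ht0])
      simpa using this
    have h2 : Summable (fun i : ℕ => t ^ i) := summable_geometric_of_lt_one ht0 ht1
    have := h1.add h2
    refine this.congr fun i => ?_
    simp [hwdef]; ring
  have hterm : ∀ (R : ℝ), 0 ≤ R → ∀ (x : EuclideanSpace ℝ (Fin n)), ‖x‖ ≤ R → ∀ i : ℕ,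
      ‖mulVecE (A ^ i * B) (h (finv^[i + 1] x))‖ ≤ K R * w i := by
    intro R hR x hx i
    have hnormM : ‖cmat (A ^ i * B)‖ ≤ q ^ i * ‖cmat B‖ := by
      rw [cmat_mul, cmat_pow]
      calc ‖cmat A ^ i * cmat B‖ ≤ ‖cmat A ^ i‖ * ‖cmat B‖ := Matrix.l2_opNorm_mul _ _
      _ ≤ ‖cmat A‖ ^ i * ‖cmat B‖ :=
          mul_le_mul_of_nonneg_right (norm_pow_le _ i) (norm_nonneg _)
      _ = q ^ i * ‖cmat B‖ := by rw [hAc]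
    have hv : ‖h (finv^[i + 1] x)‖ ≤ C₁' + C₂' * (C₁ * (↑(i+1) : ℝ) * M ^ (i+1) + C₂ ^ (i+1) * R) := by
      refine le_trans (hout _) ?_
      have hb := hfinv_bound x (i+1)
      have hb2 : ‖finv^[i+1] x‖ ≤ C₁ * (↑(i+1) : ℝ) * M ^ (i+1) + C₂ ^ (i+1) * R := by
        refine le_trans hb ?_
        have : C₂ ^ (i+1) * ‖x‖ ≤ C₂ ^ (i+1) * R :=
          mul_le_mul_of_nonneg_left hx (pow_nonneg hC₂ _)
        linarith
      nlinarith [mul_le_mul_of_nonneg_left hb2 hC₂']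
    have hmain : ‖mulVecE (A ^ i * B) (h (finv^[i + 1] x))‖
        ≤ (q ^ i * ‖cmat B‖) * (C₁' + C₂' * (C₁ * (↑(i+1) : ℝ) * M ^ (i+1) + C₂ ^ (i+1) * R)) := by
      refine le_trans (norm_mulVecE_le _ _) ?_
      have hn0 : (0:ℝ) ≤ ‖h (finv^[i + 1] x)‖ := norm_nonneg _
      refine mul_le_mul hnormM hv hn0 (mul_nonneg (pow_nonneg hq0 _) (norm_nonneg _))
    refine le_trans hmain ?_
    -- expand and compare with K R * w i
    have e1 : q ^ i ≤ t ^ i := pow_le_pow_left₀ hq0 hqt i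
    have e1' : q ^ i ≤ ((i:ℝ)+1) * t ^ i := by
      refine le_trans e1 ?_
      nlinarith [pow_nonneg ht0 i, Nat.cast_nonneg (α := ℝ) i]
    have e2 : M ^ (i+1) * q ^ i = M * t ^ i := by
      rw [htdef, mul_pow, pow_succ]; ring
    have e3 : C₂ ^ (i+1) * q ^ i ≤ C₂ * t ^ i := by
      have : C₂ ^ (i+1) * q ^ i = C₂ * (C₂ * q) ^ i := by rw [mul_pow, pow_succ]; ring
      rw [this]
      exact mul_le_mul_of_nonneg_left
        (pow_le_pow_left₀ (mul_nonneg hC₂ hq0) hCt i) hC₂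
    have hBn : (0:ℝ) ≤ ‖cmat B‖ := norm_nonneg _
    have hwpos : (0:ℝ) ≤ t ^ i := pow_nonneg ht0 _
    have hi1 : (1:ℝ) ≤ (i:ℝ) + 1 := by
      have := Nat.cast_nonneg (α := ℝ) i; linarith
    rw [hKdef, hwdef]
    have expand : (q ^ i * ‖cmat B‖) * (C₁' + C₂' * (C₁ * (↑(i+1) : ℝ) * M ^ (i+1) + C₂ ^ (i+1) * R))
        = ‖cmat B‖ * (C₁' * q ^ i + C₂' * C₁ * ((i:ℝ)+1) * (M ^ (i+1) * q ^ i)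
            + C₂' * R * (C₂ ^ (i+1) * q ^ i)) := by
      push_cast; ring
    have target : ‖cmat B‖ * (C₁' + C₂' * (C₁ * M + C₂ * R)) * (((i:ℝ) + 1) * t ^ i)
        = ‖cmat B‖ * (C₁' * (((i:ℝ)+1) * t ^ i) + C₂' * C₁ * ((i:ℝ)+1) * (M * t ^ i)
            + C₂' * R * (((i:ℝ)+1) * (C₂ * t ^ i))) := by ring
    rw [expand, target]
    refine mul_le_mul_of_nonneg_left ?_ hBn
    have p1 : C₁' * q ^ i ≤ C₁' * (((i:ℝ)+1) * t ^ i) :=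
      mul_le_mul_of_nonneg_left e1' hC₁'
    have p2 : C₂' * C₁ * ((i:ℝ)+1) * (M ^ (i+1) * q ^ i) ≤ C₂' * C₁ * ((i:ℝ)+1) * (M * t ^ i) := by
      rw [e2]
    have p3 : C₂' * R * (C₂ ^ (i+1) * q ^ i) ≤ C₂' * R * (((i:ℝ)+1) * (C₂ * t ^ i)) := by
      have h3' : C₂ ^ (i+1) * q ^ i ≤ ((i:ℝ)+1) * (C₂ * t ^ i) := by
        refine le_trans e3 ?_
        nlinarith [mul_nonneg hC₂ hwpos]
      exact mul_le_mul_of_nonneg_left h3' (mul_nonneg hC₂' hR)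
    linarith
  have hsumK : ∀ R : ℝ, Summable (fun i => K R * w i) := fun R => hw.mul_left _
  constructor
  · intro x
    exact Summable.of_norm_bounded (hsumK ‖x‖)
      (hterm ‖x‖ (norm_nonneg x) x le_rfl)
  · rw [continuous_iff_continuousAt]
    intro x₀
    set R : ℝ := ‖x₀‖ + 1 with hRdef
    have hR0 : 0 ≤ R := by positivity
    have hmem : x₀ ∈ Metric.ball (0 : EuclideanSpace ℝ (Fin n)) R := by
      rw [mem_ball_zero_iff]; simp [hRdef]
    have hcont : ∀ i : ℕ, Continuous fun x => mulVecE (A ^ i * B) (h (finv^[i + 1] x)) :=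
      fun i => (continuous_mulVecE _).comp (hh.comp (hfinv.iterate (i+1)))
    have hunif := tendstoUniformlyOn_tsum (hsumK R)
      (f := fun i x => mulVecE (A ^ i * B) (h (finv^[i + 1] x)))
      (s := Metric.ball (0 : EuclideanSpace ℝ (Fin n)) R)
      (fun i x hx => hterm R hR0 x (le_of_lt (mem_ball_zero_iff.mp hx)) i)
    have hcOn : ContinuousOn (fun x => ∑' i : ℕ, mulVecE (A ^ i * B) (h (finv^[i + 1] x)))
        (Metric.ball (0 : EuclideanSpace ℝ (Fin n)) R) := by
      refine hunif.continuousOn (Filter.Eventually.frequently ?_)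
      filter_upwards with s
      exact (continuous_finset_sum s fun i _ => hcont i).continuousOn
    exact hcOn.continuousAt (Metric.isOpen_ball.mem_nhds hmem)
end

section
/- Let X ⊆ ℝ^n be compact and backward stable (f⁻¹(X) ⊆ X), with f invertible and f⁻¹, h continuous. Let A ∈ ℝ^{m×m} with ρ(A) < 1 and B ∈ ℝ^{m×p}. Then there is at most one continuous function T : X → ℝ^m satisfying T(f(x)) = A T(x) + B h(x) for all x ∈ X. -/
open Matrix

noncomputable def cpxE {m : ℕ} (v : EuclideanSpace ℝ (Fin m)) : EuclideanSpace ℂ (Fin m) :=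
  (WithLp.equiv 2 _).symm (fun i => (v i : ℂ))

lemma cpxE_norm {m : ℕ} (v : EuclideanSpace ℝ (Fin m)) : ‖cpxE v‖ = ‖v‖ := by
  rw [EuclideanSpace.norm_eq, EuclideanSpace.norm_eq]
  simp [cpxE]

lemma key_norm {m : ℕ} (A : Matrix (Fin m) (Fin m) ℝ) (k : ℕ) (v : EuclideanSpace ℝ (Fin m)) :
    ‖mulVecE (A ^ k) v‖ ≤ ‖(Matrix.toEuclideanCLM (𝕜 := ℂ) (A.map Complex.ofReal)) ^ k‖ * ‖v‖ := by
  set L := Matrix.toEuclideanCLM (𝕜 := ℂ) (A.map Complex.ofReal)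
  have hmap : (A.map Complex.ofReal) ^ k = (A ^ k).map Complex.ofReal := by
    have : A.map Complex.ofReal = Complex.ofRealHom.mapMatrix A := rfl
    rw [this, ← map_pow]
    rfl
  have happ : (L ^ k) (cpxE v) = cpxE (mulVecE (A ^ k) v) := by
    rw [show L ^ k = Matrix.toEuclideanCLM (𝕜 := ℂ) ((A.map Complex.ofReal) ^ k) from
      (map_pow _ _ _).symm, hmap]
    show Matrix.toEuclideanCLM (𝕜 := ℂ) ((A ^ k).map Complex.ofReal)
      (WithLp.toLp 2 _) = _
    rw [Matrix.toEuclideanCLM_toLp]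
    unfold cpxE mulVecE
    congr 1
    funext i
    simp [Matrix.mulVec, dotProduct]
  calc ‖mulVecE (A ^ k) v‖ = ‖(L ^ k) (cpxE v)‖ := by rw [happ, cpxE_norm]
    _ ≤ ‖L ^ k‖ * ‖cpxE v‖ := (L ^ k).le_opNorm _
    _ = ‖L ^ k‖ * ‖v‖ := by rw [cpxE_norm]

lemma specRadius_lt {m : ℕ} (A : Matrix (Fin m) (Fin m) ℝ) (hA : specRad A < 1) :
    spectralRadius ℂ (Matrix.toEuclideanCLM (𝕜 := ℂ) (A.map Complex.ofReal)) < 1 := by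
  set Ac := A.map Complex.ofReal
  have hspec : spectrum ℂ (Matrix.toEuclideanCLM (𝕜 := ℂ) Ac) = spectrum ℂ Ac :=
    AlgEquiv.spectrum_eq (Matrix.toEuclideanCLM (𝕜 := ℂ)) Ac
  rw [spectralRadius, hspec]
  have hbdd : BddAbove ((fun z : ℂ => ‖z‖) '' spectrum ℂ Ac) :=
    ((Matrix.finite_spectrum Ac).image _).bddAbove
  have hle : ∀ z ∈ spectrum ℂ Ac, (‖z‖₊ : ENNReal) ≤ ENNReal.ofReal (specRad A) := by
    intro z hz
    rw [← ENNReal.ofReal_coe_nnreal, coe_nnnorm]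
    exact ENNReal.ofReal_le_ofReal (le_csSup hbdd ⟨z, hz, rfl⟩)
  calc ⨆ z ∈ spectrum ℂ Ac, (‖z‖₊ : ENNReal) ≤ ENNReal.ofReal (specRad A) :=
        iSup₂_le hle
    _ < 1 := ENNReal.ofReal_lt_one.mpr hA

/-- on a compact backward stable set, there is at most one continuous
solution of the functional equation `T(f(x)) = A T(x) + B h(x)`. -/
theorem stmt5 {n m p : ℕ}
    (X : Set (EuclideanSpace ℝ (Fin n))) (hX : IsCompact X)
    (f finv : EuclideanSpace ℝ (Fin n) → EuclideanSpace ℝ (Fin n))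
    (hbij : Function.LeftInverse finv f ∧ Function.RightInverse finv f)
    (hfinv : Continuous finv)
    (hback : Set.MapsTo finv X X)
    (h : EuclideanSpace ℝ (Fin n) → EuclideanSpace ℝ (Fin p)) (hh : Continuous h)
    (A : Matrix (Fin m) (Fin m) ℝ) (hA : specRad A < 1)
    (B : Matrix (Fin m) (Fin p) ℝ)
    (T₁ T₂ : EuclideanSpace ℝ (Fin n) → EuclideanSpace ℝ (Fin m))
    (hT₁c : ContinuousOn T₁ X) (hT₂c : ContinuousOn T₂ X)
    (hT₁ : ∀ x ∈ X, T₁ (f x) = mulVecE A (T₁ x) + mulVecE B (h x))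
    (hT₂ : ∀ x ∈ X, T₂ (f x) = mulVecE A (T₂ x) + mulVecE B (h x)) :
    ∀ x ∈ X, T₁ x = T₂ x := by
  intro x hx
  set L := Matrix.toEuclideanCLM (𝕜 := ℂ) (A.map Complex.ofReal) with hL
  -- one-step recursion for the difference
  have hstep : ∀ y ∈ X, T₁ y - T₂ y = mulVecE A (T₁ (finv y) - T₂ (finv y)) := by
    intro y hy
    have h1 := hT₁ (finv y) (hback hy)
    have h2 := hT₂ (finv y) (hback hy)
    rw [hbij.2 y] at h1 h2
    rw [h1, h2]
    show _ = WithLp.toLp 2 (A.mulVec (T₁ (finv y) - T₂ (finv y)))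
    rw [Matrix.mulVec_sub, WithLp.toLp_sub]
    abel_nf
    rfl
  -- iterated recursion
  have hiter : ∀ k : ℕ, ∀ y ∈ X,
      T₁ y - T₂ y = mulVecE (A ^ k) (T₁ (finv^[k] y) - T₂ (finv^[k] y)) := by
    intro k
    induction k with
    | zero => intro y hy; simp [mulVecE, Matrix.one_mulVec]
    | succ k ih =>
      intro y hy
      rw [hstep y hy, ih (finv y) (hback hy)]
      show WithLp.toLp 2 (A.mulVec ((A ^ k).mulVec _)) = _
      rw [Matrix.mulVec_mulVec, ← pow_succ', Function.iterate_succ_apply]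
      rfl
  -- maximum of the difference on X
  obtain ⟨x₀, hx₀X, hx₀⟩ := hX.exists_isMaxOn ⟨x, hx⟩ ((hT₁c.sub hT₂c).norm)
  rw [isMaxOn_iff] at hx₀
  set M := ‖T₁ x₀ - T₂ x₀‖ with hM
  have hMnonneg : 0 ≤ M := norm_nonneg _
  have hMle : ∀ k : ℕ, M ≤ ‖L ^ k‖ * M := by
    intro k
    have hmem : finv^[k] x₀ ∈ X := Set.MapsTo.iterate hback k hx₀X
    calc M = ‖mulVecE (A ^ k) (T₁ (finv^[k] x₀) - T₂ (finv^[k] x₀))‖ := by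
          rw [hM, hiter k x₀ hx₀X]
      _ ≤ ‖L ^ k‖ * ‖T₁ (finv^[k] x₀) - T₂ (finv^[k] x₀)‖ := key_norm A k _
      _ ≤ ‖L ^ k‖ * M := by
          exact mul_le_mul_of_nonneg_left (hx₀ _ hmem) (norm_nonneg _)
  -- M must be 0
  have hM0 : M = 0 := by
    by_contra hne
    have hMpos : 0 < M := lt_of_le_of_ne hMnonneg (Ne.symm hne)
    have hone : ∀ k : ℕ, 1 ≤ ‖L ^ k‖ := by
      intro k
      have := hMle k
      nlinarith
    have hge : (1 : ENNReal) ≤ spectralRadius ℂ L := by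
      refine ge_of_tendsto' (spectrum.pow_nnnorm_pow_one_div_tendsto_nhds_spectralRadius L)
        fun k => ?_
      rcases Nat.eq_zero_or_pos k with hk | hk
      · subst hk
        simp only [Nat.cast_zero, div_zero, ENNReal.rpow_zero, le_refl]
      · have : (1 : ENNReal) ≤ (‖L ^ k‖₊ : ENNReal) := by
          rw [← ENNReal.ofReal_coe_nnreal, coe_nnnorm]
          exact ENNReal.one_le_ofReal.mpr (hone k)
        calc (1 : ENNReal) = 1 ^ (1 / k : ℝ) := (ENNReal.one_rpow _).symm
          _ ≤ (‖L ^ k‖₊ : ENNReal) ^ (1 / k : ℝ) :=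
            ENNReal.rpow_le_rpow this (by positivity)
    exact absurd (specRadius_lt A hA) (not_lt.mpr hge)
  have := hx₀ x hx
  change ‖T₁ x - T₂ x‖ ≤ M at this
  rw [hM0] at this
  have : T₁ x - T₂ x = 0 := by
    have := le_antisymm this (norm_nonneg _)
    exact norm_eq_zero.mp this
  exact sub_eq_zero.mp this
end

section
/- Let F ∈ ℝ^{n×n}, H ∈ ℝ^{p×k_d}, h(x) = H P_d(x), and let D satisfy P_d(F x) = D P_d(x). If A ∈ ℝ^{m×m} and B ∈ ℝ^{m×p} are such that the Sylvester equation M D = A M + B H has a solution M ∈ ℝ^{m×k_d}, then T(x) := M P_d(x) satisfies T(F x) = A T(x) + B h(x) for all x ∈ ℝ^n. -/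
/-- Index type of the monomials `x₁^{α₁}⋯x_n^{α_n}` of total degree at most `d`. -/
def MonIdx (n d : ℕ) : Type :=
  {α : Fin n → Fin (d + 1) // (∑ i, (α i : ℕ)) ≤ d}

instance (n d : ℕ) : Fintype (MonIdx n d) := Subtype.fintype _

/-- The vector of all monomials of degree at most `d` evaluated at `x`. -/
def monVec {n d : ℕ} (x : Fin n → ℝ) : MonIdx n d → ℝ :=
  fun α => ∏ i, x i ^ (α.1 i : ℕ)

/-- if `P_d(Fx) = D P_d(x)`, `h = H P_d`, and `M` solves the Sylvester
equation `M D = A M + B H`, then `T = M P_d` satisfies `T(Fx) = A T(x) + B h(x)`. -/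
theorem stmt14 (n d m p : ℕ) (F : Matrix (Fin n) (Fin n) ℝ)
    (H : Matrix (Fin p) (MonIdx n d) ℝ)
    (h : (Fin n → ℝ) → (Fin p → ℝ)) (hh : ∀ x, h x = H.mulVec (monVec x))
    (D : Matrix (MonIdx n d) (MonIdx n d) ℝ)
    (hD : ∀ x : Fin n → ℝ, monVec (d := d) (F.mulVec x) = D.mulVec (monVec x))
    (A : Matrix (Fin m) (Fin m) ℝ) (B : Matrix (Fin m) (Fin p) ℝ)
    (M : Matrix (Fin m) (MonIdx n d) ℝ) (hM : M * D = A * M + B * H)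
    (T : (Fin n → ℝ) → (Fin m → ℝ)) (hT : ∀ x, T x = M.mulVec (monVec x)) :
    ∀ x : Fin n → ℝ, T (F.mulVec x) = A.mulVec (T x) + B.mulVec (h x) := by
  intro x
  rw [hT, hT, hh, hD, Matrix.mulVec_mulVec, hM, Matrix.add_mulVec,
    ← Matrix.mulVec_mulVec, ← Matrix.mulVec_mulVec]
end

section
/- For the continuous-time system ẋ₁ = x₂, ẋ₂ = −x₁ with output y = x₁² − x₂² + x₁ + x₂, the map ℝ² → ℝ⁴ sending x to (y, ẏ, ÿ, y⃛) evaluated along the flow at time 0 — explicitly x ↦ (x₁²−x₂²+x₁+x₂, −4x₁x₂+x₂−x₁, −4(x₁²−x₂²)−x₁−x₂, 16x₁x₂−x₂+x₁) — is injective on ℝ². -/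
/-- for the system `ẋ₁ = x₂, ẋ₂ = −x₁` with
`y = x₁² − x₂² + x₁ + x₂`, the map `x ↦ (y, ẏ, ÿ, y⃛)` is injective on `ℝ²`. -/
theorem stmt15 :
    Function.Injective (fun x : ℝ × ℝ =>
      (x.1 ^ 2 - x.2 ^ 2 + x.1 + x.2,
       -4 * x.1 * x.2 + x.2 - x.1,
       -4 * (x.1 ^ 2 - x.2 ^ 2) - x.1 - x.2,
       16 * x.1 * x.2 - x.2 + x.1)) := by
  intro a b h
  simp only [Prod.mk.injEq] at h
  obtain ⟨h1, h2, h3, h4⟩ := h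
  have hs : a.1 + a.2 = b.1 + b.2 := by linarith
  have hd : a.2 - a.1 = b.2 - b.1 := by linarith
  have : a.1 = b.1 := by linarith
  have : a.2 = b.2 := by linarith
  exact Prod.ext ‹a.1 = b.1› ‹a.2 = b.2›
end
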